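/- Let G be a compact subgroup of O(N), let A ⊂ ℝ^N be open and bounded, and suppose φ : A → U × V is a C¹ diffeomorphism onto a product U × V with U ⊂ ℝ^δ, V ⊂ ℝ^{N−δ} open and bounded, such that there are constants 0 < C₀ ≤ D₀ with C₀ ≤ |det Dφ^{-1}(z)| ≤ D₀ for all z ∈ U × V, and such that for all y ∈ A, U × Π₂(φ(y)) ⊂ φ(O^y_G ∩ A). Then every G-invariant u ∈ L^p(A) (p > 1) satisfies u(φ^{-1}(v₁, v₂)) = ũ(v₂) for a function ũ ∈ L^p(V) depending only on the second coordinate, and there exist positive constants c, C independent of u with c (∫_V |ũ(v₂)|^p dv₂)^{1/p} ≤ (∫_A |u(x)|^p dx)^{1/p} ≤ C (∫_V |ũ(v₂)|^p dv₂)^{1/p}. -/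

import Mathlib

/-!
By `G`-invariance and the orbit condition, `u ∘ φ⁻¹` does not depend on the first coordinate on
`U × V`, i.e. `u ∘ φ⁻¹ = ũ ∘ Π₂`. Changing variables `x = φ⁻¹ z` with the Jacobian pinched
between `C₀` and `D₀`, and integrating out `v₁ ∈ U` by Fubini, gives
`C₀ |U| ∫_V |ũ|^p ≤ ∫_A |u|^p ≤ D₀ |U| ∫_V |ũ|^p`; taking `p`-th roots yields
`c = (C₀ |U|)^{1/p}` and `C = (D₀ |U|)^{1/p}`.
-/

open MeasureTheory Metric Bornology ENNReal

noncomputable section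

/-- `E n` is Euclidean space `ℝ^n`. -/
abbrev E (n : ℕ) : Type := EuclideanSpace ℝ (Fin n)

/-- The orbit `O^x_G = {g x : g ∈ G}` of a point `x ∈ ℝ^n` under a subgroup `G` of the
orthogonal group `O(n)`. -/
def orbitSet {n : ℕ} (G : Subgroup (Matrix.orthogonalGroup (Fin n) ℝ)) (x : E n) :
    Set (E n) :=
  {y | ∃ g ∈ G, Matrix.mulVec (g : Matrix (Fin n) (Fin n) ℝ) x = y}

/-- First component of `ℝ^{δ+ν} = ℝ^δ × ℝ^ν`. -/
def split1 {δ ν : ℕ} (x : E (δ + ν)) : E δ := WithLp.toLp 2 (fun i => x (Fin.castAdd ν i))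

/-- Second component of `ℝ^{δ+ν} = ℝ^δ × ℝ^ν`. -/
def split2 {δ ν : ℕ} (x : E (δ + ν)) : E ν := WithLp.toLp 2 (fun i => x (Fin.natAdd δ i))

/-- The identification `ℝ^δ × ℝ^ν → ℝ^{δ+ν}`. -/
def joinE {δ ν : ℕ} (x : E δ) (y : E ν) : E (δ + ν) :=
  WithLp.toLp 2 (fun i => Fin.addCases (motive := fun _ => ℝ) (fun i₁ => x i₁) (fun i₂ => y i₂) i)

namespace MeasureTheory

section ChangeOfVariables

variable {F : Type*} [NormedAddCommGroup F] [NormedSpace ℝ F] [FiniteDimensional ℝ F]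
  [MeasurableSpace F] [BorelSpace F] (μ : Measure F) [μ.IsAddHaarMeasure]
  {s t : Set F} {f φ ψ : F → F} {f' : F → F →L[ℝ] F}

theorem le_lintegral_image_of_le_abs_det_fderiv {c : ℝ} (hs : MeasurableSet s)
    (hf' : ∀ x ∈ s, HasFDerivWithinAt f (f' x) s x) (hf : Set.InjOn f s)
    (hc : ∀ x ∈ s, c ≤ |(f' x).det|) (g : F → ℝ≥0∞) :
    ENNReal.ofReal c * ∫⁻ x in s, g (f x) ∂μ ≤ ∫⁻ y in f '' s, g y ∂μ := by
  rw [lintegral_image_eq_lintegral_abs_det_fderiv_mul μ hs hf' hf,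
    ← lintegral_const_mul' _ _ ofReal_ne_top]
  exact setLIntegral_mono' hs fun x hx => by gcongr; exact hc x hx

theorem lintegral_image_le_of_abs_det_fderiv_le {d : ℝ} (hs : MeasurableSet s)
    (hf' : ∀ x ∈ s, HasFDerivWithinAt f (f' x) s x) (hf : Set.InjOn f s)
    (hd : ∀ x ∈ s, |(f' x).det| ≤ d) (g : F → ℝ≥0∞) :
    ∫⁻ y in f '' s, g y ∂μ ≤ ENNReal.ofReal d * ∫⁻ x in s, g (f x) ∂μ := by
  rw [lintegral_image_eq_lintegral_abs_det_fderiv_mul μ hs hf' hf,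
    ← lintegral_const_mul' _ _ ofReal_ne_top]
  exact setLIntegral_mono' hs fun x hx => by gcongr; exact hd x hx

variable {μ}

/-- The points of `s` where `g ∘ ψ ≠ h ∘ ψ` lie in `φ '' N` for a null set `N ⊆ t`, and the
differentiable map `φ` sends null sets to null sets. -/
theorem ae_restrict_comp_eq_of_leftInvOn {X : Type*} {g h : F → X}
    (hgh : g =ᵐ[μ.restrict t] h) (hφ : DifferentiableOn ℝ φ t) (hs : MeasurableSet s)
    (hψ : Set.MapsTo ψ s t) (hinv : Set.LeftInvOn φ ψ s) : g ∘ ψ =ᵐ[μ.restrict s] h ∘ ψ := by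
  set N := {x | g x ≠ h x} ∩ t
  have hN : μ N = 0 :=
    le_zero_iff.1 ((Measure.le_restrict_apply t _).trans (ae_iff.1 hgh).le)
  have hφN : μ (φ '' N) = 0 :=
    addHaar_image_eq_zero_of_differentiableOn_of_addHaar_eq_zero μ
      (hφ.mono Set.inter_subset_right) hN
  rw [Filter.EventuallyEq, ae_restrict_iff' hs]
  refine measure_mono_null (fun z hz => ?_) hφN
  obtain ⟨hzs, hne⟩ := Classical.not_imp.1 hz
  exact ⟨ψ z, ⟨hne, hψ hzs⟩, hinv hzs⟩

theorem AEStronglyMeasurable.comp_of_leftInvOn {X : Type*} [TopologicalSpace X] {g : F → X}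
    (hg : AEStronglyMeasurable g (μ.restrict t)) (hφ : DifferentiableOn ℝ φ t)
    (hψc : ContinuousOn ψ s) (hs : MeasurableSet s) (hψ : Set.MapsTo ψ s t)
    (hinv : Set.LeftInvOn φ ψ s) : AEStronglyMeasurable (g ∘ ψ) (μ.restrict s) :=
  (hg.stronglyMeasurable_mk.aestronglyMeasurable.comp_aemeasurable (hψc.aemeasurable hs)).congr
    (ae_restrict_comp_eq_of_leftInvOn hg.ae_eq_mk hφ hs hψ hinv).symm

end ChangeOfVariables

section LpComparison

variable {α β : Type*} [MeasurableSpace α] [MeasurableSpace β] {μ : Measure α} {ν : Measure β}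
  {f : α → ℝ} {g : β → ℝ} {p k : ℝ}

theorem integral_abs_rpow_eq_toReal_lintegral (hp : 0 ≤ p) (hf : AEStronglyMeasurable f μ) :
    ∫ x, |f x| ^ p ∂μ = (∫⁻ x, ‖f x‖ₑ ^ p ∂μ).toReal := by
  rw [integral_eq_lintegral_of_nonneg_ae (ae_of_all _ fun x => by positivity) (by fun_prop)]
  congr 1
  refine lintegral_congr fun x => ?_
  rw [Real.enorm_eq_ofReal_abs, ENNReal.ofReal_rpow_of_nonneg (abs_nonneg _) hp]

theorem MemLp.lintegral_rpow_enorm_ne_top (hp : 0 < p) (hf : MemLp f (ENNReal.ofReal p) μ) :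
    ∫⁻ x, ‖f x‖ₑ ^ p ∂μ ≠ ∞ := by
  simpa [ENNReal.toReal_ofReal hp.le] using (lintegral_rpow_enorm_lt_top_of_eLpNorm_lt_top
    (ENNReal.ofReal_pos.2 hp).ne' ofReal_ne_top hf.eLpNorm_lt_top).ne

theorem MemLp.of_ofReal_mul_lintegral_le (hp : 0 < p) (hk : 0 < k)
    (hf : MemLp f (ENNReal.ofReal p) μ) (hg : AEStronglyMeasurable g ν)
    (h : ENNReal.ofReal k * ∫⁻ y, ‖g y‖ₑ ^ p ∂ν ≤ ∫⁻ x, ‖f x‖ₑ ^ p ∂μ) :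
    MemLp g (ENNReal.ofReal p) ν := by
  refine ⟨hg, (eLpNorm_lt_top_iff_lintegral_rpow_enorm_lt_top (ENNReal.ofReal_pos.2 hp).ne'
    ofReal_ne_top).2 ?_⟩
  rw [ENNReal.toReal_ofReal hp.le]
  exact ENNReal.lt_top_of_mul_ne_top_right
    (ne_top_of_le_ne_top (hf.lintegral_rpow_enorm_ne_top hp) h) (ENNReal.ofReal_pos.2 hk).ne'

theorem mul_rpow_integral_le_of_ofReal_mul_lintegral_le (hp : 0 < p) (hk : 0 ≤ k)
    (hf : MemLp f (ENNReal.ofReal p) μ) (hg : AEStronglyMeasurable g ν)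
    (h : ENNReal.ofReal k * ∫⁻ y, ‖g y‖ₑ ^ p ∂ν ≤ ∫⁻ x, ‖f x‖ₑ ^ p ∂μ) :
    k ^ (1 / p) * (∫ y, |g y| ^ p ∂ν) ^ (1 / p) ≤ (∫ x, |f x| ^ p ∂μ) ^ (1 / p) := by
  have h' := ENNReal.toReal_mono (hf.lintegral_rpow_enorm_ne_top hp) h
  rw [ENNReal.toReal_mul, ENNReal.toReal_ofReal hk] at h'
  rw [integral_abs_rpow_eq_toReal_lintegral hp.le hg,
    integral_abs_rpow_eq_toReal_lintegral hp.le hf.aestronglyMeasurable,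
    ← Real.mul_rpow hk toReal_nonneg]
  exact Real.rpow_le_rpow (by positivity) h' (by positivity)

theorem rpow_integral_le_mul_of_lintegral_le_ofReal_mul (hp : 0 < p) (hk : 0 ≤ k)
    (hf : AEStronglyMeasurable f μ) (hg : MemLp g (ENNReal.ofReal p) ν)
    (h : ∫⁻ x, ‖f x‖ₑ ^ p ∂μ ≤ ENNReal.ofReal k * ∫⁻ y, ‖g y‖ₑ ^ p ∂ν) :
    (∫ x, |f x| ^ p ∂μ) ^ (1 / p) ≤ k ^ (1 / p) * (∫ y, |g y| ^ p ∂ν) ^ (1 / p) := by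
  have h' := ENNReal.toReal_mono
    (ENNReal.mul_ne_top ofReal_ne_top (hg.lintegral_rpow_enorm_ne_top hp)) h
  rw [ENNReal.toReal_mul, ENNReal.toReal_ofReal hk] at h'
  rw [integral_abs_rpow_eq_toReal_lintegral hp.le hg.aestronglyMeasurable,
    integral_abs_rpow_eq_toReal_lintegral hp.le hf, ← Real.mul_rpow hk toReal_nonneg]
  exact Real.rpow_le_rpow toReal_nonneg h' (by positivity)

end LpComparison

end MeasureTheory

def IsInvariantOn {n : ℕ} (G : Subgroup (Matrix.orthogonalGroup (Fin n) ℝ)) (A : Set (E n))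
    {X : Type*} (u : E n → X) : Prop :=
  ∀ g ∈ G, ∀ x : E n, x ∈ A →
    WithLp.toLp 2 (Matrix.mulVec (g : Matrix (Fin n) (Fin n) ℝ) x) ∈ A →
    u (WithLp.toLp 2 (Matrix.mulVec (g : Matrix (Fin n) (Fin n) ℝ) x)) = u x

section SplitCoordinates

variable {δ ν : ℕ} {U : Set (E δ)} {V : Set (E ν)}

theorem split1_joinE (a : E δ) (b : E ν) : split1 (joinE a b) = a := by
  ext i; simp [split1, joinE]

theorem split2_joinE (a : E δ) (b : E ν) : split2 (joinE a b) = b := by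
  ext i; simp [split2, joinE]

theorem continuous_split1 : Continuous (split1 : E (δ + ν) → E δ) := by
  unfold split1; fun_prop

theorem continuous_split2 : Continuous (split2 : E (δ + ν) → E ν) := by
  unfold split2; fun_prop

theorem isOpen_setOf_split_mem (hU : IsOpen U) (hV : IsOpen V) :
    IsOpen {z : E (δ + ν) | split1 z ∈ U ∧ split2 z ∈ V} :=
  (hU.preimage continuous_split1).inter (hV.preimage continuous_split2)

variable (δ ν) in
def splitEquiv : E (δ + ν) ≃ᵐ E δ × E ν :=
  (MeasurableEquiv.toLp 2 (Fin (δ + ν) → ℝ)).symm.trans <|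
    (MeasurableEquiv.piCongrLeft (fun _ => ℝ) finSumFinEquiv).symm.trans <|
      (MeasurableEquiv.sumPiEquivProdPi (fun _ : Fin δ ⊕ Fin ν => ℝ)).trans <|
        (MeasurableEquiv.toLp 2 (Fin δ → ℝ)).prodCongr (MeasurableEquiv.toLp 2 (Fin ν → ℝ))

theorem splitEquiv_apply (z : E (δ + ν)) : splitEquiv δ ν z = (split1 z, split2 z) := by
  ext <;>
  simp [splitEquiv, MeasurableEquiv.piCongrLeft, Equiv.piCongrLeft,
    MeasurableEquiv.sumPiEquivProdPi, Equiv.sumPiEquivProdPi, split1, split2,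
    MeasurableEquiv.toLp, Equiv.piCongrLeft', MeasurableEquiv.prodCongr,
    Equiv.prodCongr] <;> rfl

theorem measurePreserving_splitEquiv : MeasurePreserving (splitEquiv δ ν) volume volume :=
  (((EuclideanSpace.volume_preserving_symm_measurableEquiv_toLp (Fin δ)).symm _).prod
    ((EuclideanSpace.volume_preserving_symm_measurableEquiv_toLp (Fin ν)).symm _)).comp
    (volume_measurePreserving_sumPiEquivProdPi _) |>.comp
    ((volume_measurePreserving_piCongrLeft _ finSumFinEquiv).symm _) |>.comp
    (EuclideanSpace.volume_preserving_symm_measurableEquiv_toLp _)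

theorem measurePreserving_splitEquiv_restrict :
    MeasurePreserving (splitEquiv δ ν) (volume.restrict {z | split1 z ∈ U ∧ split2 z ∈ V})
      ((volume.restrict U).prod (volume.restrict V)) := by
  have hpre : splitEquiv δ ν ⁻¹' U ×ˢ V = {z | split1 z ∈ U ∧ split2 z ∈ V} := by
    ext z; simp [splitEquiv_apply]
  rw [Measure.prod_restrict, ← Measure.volume_eq_prod, ← hpre]
  exact measurePreserving_splitEquiv.restrict_preimage_emb (splitEquiv δ ν).measurableEmbedding _

theorem setLIntegral_comp_split2 {F : E ν → ℝ≥0∞} (hF : AEMeasurable F (volume.restrict V)) :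
    ∫⁻ z in {z | split1 z ∈ U ∧ split2 z ∈ V}, F (split2 z) = volume U * ∫⁻ v in V, F v := by
  have h := (measurePreserving_splitEquiv_restrict (U := U) (V := V)).lintegral_comp_emb
    (splitEquiv δ ν).measurableEmbedding (fun w => F w.2)
  simp only [splitEquiv_apply] at h
  rw [h, lintegral_prod _ hF.comp_snd]
  exact (setLIntegral_const U (∫⁻ v in V, F v)).trans (mul_comm _ _)

theorem MeasureTheory.AEStronglyMeasurable.of_comp_split2 {X : Type*} [TopologicalSpace X]
    {F : E ν → X} (hU : volume U ≠ 0)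
    (hF : AEStronglyMeasurable (fun z => F (split2 z))
      (volume.restrict {z | split1 z ∈ U ∧ split2 z ∈ V})) :
    AEStronglyMeasurable F (volume.restrict V) := by
  refine AEStronglyMeasurable.of_comp_snd ?_ (mt Measure.restrict_eq_zero.1 hU)
  rw [← measurePreserving_splitEquiv_restrict.aestronglyMeasurable_comp_iff
    (splitEquiv δ ν).measurableEmbedding]
  simpa only [Function.comp_def, splitEquiv_apply] using hF

variable {G : Subgroup (Matrix.orthogonalGroup (Fin (δ + ν)) ℝ)} {A : Set (E (δ + ν))}
  {φ ψ : E (δ + ν) → E (δ + ν)}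

theorem lintegral_image_bounds_of_comp_eq_split2 {C₀ D₀ : ℝ} (hUo : IsOpen U) (hVo : IsOpen V)
    (hψ : ContDiffOn ℝ 1 ψ {z | split1 z ∈ U ∧ split2 z ∈ V})
    (hinj : Set.InjOn ψ {z | split1 z ∈ U ∧ split2 z ∈ V})
    (hdet : ∀ z, split1 z ∈ U → split2 z ∈ V →
      C₀ ≤ |(fderiv ℝ ψ z).det| ∧ |(fderiv ℝ ψ z).det| ≤ D₀)
    {g : E (δ + ν) → ℝ≥0∞} {F : E ν → ℝ≥0∞} (hF : AEMeasurable F (volume.restrict V))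
    (hgF : ∀ z ∈ {z | split1 z ∈ U ∧ split2 z ∈ V}, g (ψ z) = F (split2 z)) :
    ENNReal.ofReal C₀ * volume U * ∫⁻ v in V, F v
        ≤ ∫⁻ x in ψ '' {z | split1 z ∈ U ∧ split2 z ∈ V}, g x ∧
      ∫⁻ x in ψ '' {z | split1 z ∈ U ∧ split2 z ∈ V}, g x
        ≤ ENNReal.ofReal D₀ * volume U * ∫⁻ v in V, F v := by
  have hPo := isOpen_setOf_split_mem hUo hVo
  have hψ' : ∀ z ∈ {z | split1 z ∈ U ∧ split2 z ∈ V},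
      HasFDerivWithinAt ψ (fderiv ℝ ψ z) {z | split1 z ∈ U ∧ split2 z ∈ V} z := fun z hz =>
    ((hψ.differentiableOn one_ne_zero z hz).differentiableAt
      (hPo.mem_nhds hz)).hasFDerivAt.hasFDerivWithinAt
  have hint : ∫⁻ z in {z | split1 z ∈ U ∧ split2 z ∈ V}, g (ψ z) = volume U * ∫⁻ v in V, F v := by
    rw [setLIntegral_congr_fun hPo.measurableSet hgF]
    exact setLIntegral_comp_split2 hF
  rw [mul_assoc, mul_assoc, ← hint]
  exact ⟨le_lintegral_image_of_le_abs_det_fderiv volume hPo.measurableSet hψ' hinj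
      (fun z hz => (hdet z hz.1 hz.2).1) g,
    lintegral_image_le_of_abs_det_fderiv_le volume hPo.measurableSet hψ' hinj
      (fun z hz => (hdet z hz.1 hz.2).2) g⟩

/-- The orbit condition lets us move `ψ z` within its orbit to a point whose chart image has any
prescribed first coordinate `v₁ ∈ U`. -/
theorem IsInvariantOn.apply_joinE_split2 {X : Type*} {u : E (δ + ν) → X} (hu : IsInvariantOn G A u)
    (hφim : φ '' A = {z | split1 z ∈ U ∧ split2 z ∈ V}) (hinv : Set.LeftInvOn ψ φ A)
    (horb : ∀ y ∈ A, ∀ v₁ ∈ U, joinE v₁ (split2 (φ y)) ∈ φ '' (orbitSet G y ∩ A))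
    {z : E (δ + ν)} (hz : z ∈ {z | split1 z ∈ U ∧ split2 z ∈ V}) {v₁ : E δ} (hv₁ : v₁ ∈ U) :
    u (ψ (joinE v₁ (split2 z))) = u (ψ z) := by
  obtain ⟨x, hx, rfl⟩ : z ∈ φ '' A := hφim ▸ hz
  obtain ⟨y, ⟨⟨g, hg, hgx⟩, hyA⟩, hφy⟩ := horb x hx v₁ hv₁
  obtain rfl : WithLp.toLp 2 (Matrix.mulVec (g : Matrix (Fin (δ + ν)) (Fin (δ + ν)) ℝ) x) = y := by
    rw [hgx]
  rw [← hφy, hinv hyA, hinv hx]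
  exact hu g hg x hx hyA

theorem IsInvariantOn.exists_comp_eq_comp_split2 {X : Type*} [TopologicalSpace X]
    {u : E (δ + ν) → X} (hu : IsInvariantOn G A u)
    (hum : AEStronglyMeasurable u (volume.restrict A)) (hUo : IsOpen U) (hVo : IsOpen V)
    (hU : U.Nonempty) (hφ : DifferentiableOn ℝ φ A)
    (hψ : ContinuousOn ψ {z | split1 z ∈ U ∧ split2 z ∈ V})
    (hφim : φ '' A = {z | split1 z ∈ U ∧ split2 z ∈ V}) (hinv : Set.LeftInvOn ψ φ A)
    (horb : ∀ y ∈ A, ∀ v₁ ∈ U, joinE v₁ (split2 (φ y)) ∈ φ '' (orbitSet G y ∩ A)) :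
    ∃ ut : E ν → X, (∀ z ∈ {z | split1 z ∈ U ∧ split2 z ∈ V}, u (ψ z) = ut (split2 z)) ∧
      AEStronglyMeasurable ut (volume.restrict V) := by
  obtain ⟨v₀, hv₀⟩ := hU
  have hconst : ∀ z ∈ {z | split1 z ∈ U ∧ split2 z ∈ V},
      u (ψ z) = u (ψ (joinE v₀ (split2 z))) := fun z hz =>
    (hu.apply_joinE_split2 hφim hinv horb hz hv₀).symm
  have hPm := (isOpen_setOf_split_mem hUo hVo).measurableSet
  have hψP : ψ '' {z | split1 z ∈ U ∧ split2 z ∈ V} = A := hφim ▸ hinv.image_image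
  have hφψ : Set.LeftInvOn φ ψ {z | split1 z ∈ U ∧ split2 z ∈ V} :=
    hφim ▸ hinv.rightInvOn_image
  refine ⟨fun v => u (ψ (joinE v₀ v)), hconst, ?_⟩
  refine AEStronglyMeasurable.of_comp_split2 (hUo.measure_pos volume ⟨v₀, hv₀⟩).ne' ?_
  exact (hum.comp_of_leftInvOn hφ hψ hPm (hψP ▸ Set.mapsTo_image ψ _) hφψ).congr
    ((ae_restrict_iff' hPm).2 (ae_of_all _ hconst))

end SplitCoordinates

theorem G_invariant_chart_Lp_comparison_general (δ ν : ℕ)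
    (G : Subgroup (Matrix.orthogonalGroup (Fin (δ + ν)) ℝ))
    (A : Set (E (δ + ν)))
    (U : Set (E δ)) (V : Set (E ν)) (hUo : IsOpen U) (hVo : IsOpen V)
    (hUb : IsBounded U)
    (φ ψ : E (δ + ν) → E (δ + ν))
    (hφ : ContDiffOn ℝ 1 φ A)
    (hψ : ContDiffOn ℝ 1 ψ {z | split1 z ∈ U ∧ split2 z ∈ V})
    (hφim : φ '' A = {z | split1 z ∈ U ∧ split2 z ∈ V})
    (hinv1 : ∀ x ∈ A, ψ (φ x) = x)
    (C₀ D₀ : ℝ) (hC₀ : 0 < C₀) (hCD : C₀ ≤ D₀)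
    (hdet : ∀ z, split1 z ∈ U → split2 z ∈ V →
      C₀ ≤ |(fderiv ℝ ψ z).det| ∧ |(fderiv ℝ ψ z).det| ≤ D₀)
    (horb : ∀ y ∈ A, ∀ v₁ ∈ U, joinE v₁ (split2 (φ y)) ∈ φ '' (orbitSet G y ∩ A))
    (p : ℝ) (hp : 1 < p) :
    ∃ c > 0, ∃ C > 0, ∀ u : E (δ + ν) → ℝ,
      MemLp u (ENNReal.ofReal p) (volume.restrict A) →
      (∀ g ∈ G, ∀ x : E (δ + ν), x ∈ A →
        WithLp.toLp 2 (Matrix.mulVec (g : Matrix (Fin (δ + ν)) (Fin (δ + ν)) ℝ) x) ∈ A →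
        u (WithLp.toLp 2 (Matrix.mulVec (g : Matrix (Fin (δ + ν)) (Fin (δ + ν)) ℝ) x)) = u x) →
      ∃ ut : E ν → ℝ,
        (∀ v₁ ∈ U, ∀ v₂ ∈ V, u (ψ (joinE v₁ v₂)) = ut v₂) ∧
        MemLp ut (ENNReal.ofReal p) (volume.restrict V) ∧
        c * (∫ v₂ in V, |ut v₂| ^ p) ^ (1 / p)
            ≤ (∫ x in A, |u x| ^ p) ^ (1 / p) ∧
        (∫ x in A, |u x| ^ p) ^ (1 / p)
            ≤ C * (∫ v₂ in V, |ut v₂| ^ p) ^ (1 / p) := by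
  have hp0 : 0 < p := one_pos.trans hp
  rcases U.eq_empty_or_nonempty with rfl | hU
  · obtain rfl : A = ∅ := (Set.image_eq_empty (f := φ)).1 (by simpa using hφim)
    refine ⟨1, one_pos, 1, one_pos, fun u _ _ => ⟨0, by simp, MemLp.zero', ?_, ?_⟩⟩ <;>
      simp [hp0.ne']
  have hψP : ψ '' {z | split1 z ∈ U ∧ split2 z ∈ V} = A :=
    hφim ▸ Set.LeftInvOn.image_image hinv1
  have hφψ : Set.LeftInvOn φ ψ {z | split1 z ∈ U ∧ split2 z ∈ V} :=
    hφim ▸ Set.LeftInvOn.rightInvOn_image hinv1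
  have hUt : volume U ≠ ∞ := hUb.measure_lt_top.ne
  have hUpos : 0 < (volume U).toReal := ENNReal.toReal_pos (hUo.measure_pos volume hU).ne' hUt
  have hc : 0 < C₀ * (volume U).toReal := mul_pos hC₀ hUpos
  have hC : 0 < D₀ * (volume U).toReal := mul_pos (hC₀.trans_le hCD) hUpos
  refine ⟨_, Real.rpow_pos_of_pos hc (1 / p), _, Real.rpow_pos_of_pos hC (1 / p),
    fun u hu hGu => ?_⟩
  obtain ⟨ut, hconst, hut⟩ := IsInvariantOn.exists_comp_eq_comp_split2 hGu hu.1 hUo hVo hU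
    (hφ.differentiableOn one_ne_zero) hψ.continuousOn hφim hinv1 horb
  obtain ⟨hlow, hup⟩ := lintegral_image_bounds_of_comp_eq_split2 (g := fun x => ‖u x‖ₑ ^ p)
    hUo hVo hψ hφψ.injOn hdet
    (hut.aemeasurable.enorm.pow_const p) (fun z hz => by rw [hconst z hz])
  rw [hψP, ← ENNReal.ofReal_toReal hUt, ← ENNReal.ofReal_mul hC₀.le] at hlow
  rw [hψP, ← ENNReal.ofReal_toReal hUt, ← ENNReal.ofReal_mul (hC₀.le.trans hCD)] at hup
  have hutp := hu.of_ofReal_mul_lintegral_le hp0 hc hut hlow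
  refine ⟨ut, fun v₁ hv₁ v₂ hv₂ => ?_, hutp,
    mul_rpow_integral_le_of_ofReal_mul_lintegral_le hp0 hc.le hu hut hlow,
    rpow_integral_le_mul_of_lintegral_le_ofReal_mul hp0 hC.le hu.1 hutp hup⟩
  simpa only [split2_joinE] using
    hconst (joinE v₁ v₂) ⟨by rwa [split1_joinE], by rwa [split2_joinE]⟩

/-- If `φ : A → U × V` is a `C¹` diffeomorphism (of a bounded open `A ⊆ ℝ^N`,
`N = δ + ν`, onto a product `U × V` of bounded open sets `U ⊆ ℝ^δ`, `V ⊆ ℝ^ν`) whose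
inverse `ψ` has Jacobian determinant with `C₀ ≤ |det Dψ| ≤ D₀`, and
`U × Π₂(φ(y)) ⊆ φ(O^y_G ∩ A)` for all `y ∈ A`, then there are constants `c, C > 0`,
independent of `u`, such that every `G`-invariant `u ∈ L^p(A)` (`p > 1`) is of the form
`u(ψ(v₁, v₂)) = ũ(v₂)` with `ũ ∈ L^p(V)`, and
`c‖ũ‖_{L^p(V)} ≤ ‖u‖_{L^p(A)} ≤ C‖ũ‖_{L^p(V)}`. -/
theorem G_invariant_chart_Lp_comparison (δ ν : ℕ)
    (G : Subgroup (Matrix.orthogonalGroup (Fin (δ + ν)) ℝ))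
    (hGc : IsCompact (G : Set (Matrix.orthogonalGroup (Fin (δ + ν)) ℝ)))
    (A : Set (E (δ + ν))) (hAo : IsOpen A) (hAb : IsBounded A)
    (U : Set (E δ)) (V : Set (E ν)) (hUo : IsOpen U) (hVo : IsOpen V)
    (hUb : IsBounded U) (hVb : IsBounded V)
    (φ ψ : E (δ + ν) → E (δ + ν))
    (hφ : ContDiffOn ℝ 1 φ A)
    (hψ : ContDiffOn ℝ 1 ψ {z | split1 z ∈ U ∧ split2 z ∈ V})
    (hφim : φ '' A = {z | split1 z ∈ U ∧ split2 z ∈ V})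
    (hinv1 : ∀ x ∈ A, ψ (φ x) = x)
    (hinv2 : ∀ z, split1 z ∈ U → split2 z ∈ V → φ (ψ z) = z)
    (C₀ D₀ : ℝ) (hC₀ : 0 < C₀) (hCD : C₀ ≤ D₀)
    (hdet : ∀ z, split1 z ∈ U → split2 z ∈ V →
      C₀ ≤ |(fderiv ℝ ψ z).det| ∧ |(fderiv ℝ ψ z).det| ≤ D₀)
    (horb : ∀ y ∈ A, ∀ v₁ ∈ U, joinE v₁ (split2 (φ y)) ∈ φ '' (orbitSet G y ∩ A))
    (p : ℝ) (hp : 1 < p) :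
    ∃ c > 0, ∃ C > 0, ∀ u : E (δ + ν) → ℝ,
      MemLp u (ENNReal.ofReal p) (volume.restrict A) →
      (∀ g ∈ G, ∀ x : E (δ + ν), x ∈ A →
        WithLp.toLp 2 (Matrix.mulVec (g : Matrix (Fin (δ + ν)) (Fin (δ + ν)) ℝ) x) ∈ A →
        u (WithLp.toLp 2 (Matrix.mulVec (g : Matrix (Fin (δ + ν)) (Fin (δ + ν)) ℝ) x)) = u x) →
      ∃ ut : E ν → ℝ,
        (∀ v₁ ∈ U, ∀ v₂ ∈ V, u (ψ (joinE v₁ v₂)) = ut v₂) ∧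
        MemLp ut (ENNReal.ofReal p) (volume.restrict V) ∧
        c * (∫ v₂ in V, |ut v₂| ^ p) ^ (1 / p)
            ≤ (∫ x in A, |u x| ^ p) ^ (1 / p) ∧
        (∫ x in A, |u x| ^ p) ^ (1 / p)
            ≤ C * (∫ v₂ in V, |ut v₂| ^ p) ^ (1 / p) :=
  G_invariant_chart_Lp_comparison_general δ ν G A U V hUo hVo hUb φ ψ hφ hψ hφim hinv1 C₀ D₀ hC₀ hCD
    hdet horb p hp
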